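/- arXiv:1404.0590 — 3 statements merged into one kernel-verified Lean document; each statement's English description precedes it below -/
import Mathlib

section
/- If m ≤ an and f : X → X is an (m,n)-expansive homeomorphism of a compact metric space, then f is (a,1)-expansive. In particular, if m ≤ 2n then (m,n)-expansiveness implies expansiveness. -/
/-!
Suppose `f` is `(m,n)`-expansive with constant `e` but not `(a,1)`-expansive, so that for every
`δ > 0` some `a`-point set `A` has all its iterates `f^k A` of diameter `≤ δ`. No `n` such sets
for `δ = e` are pairwise disjoint: their union would contain `m ≤ an` points whose iterates are
always covered by `n` sets of diameter `≤ e`. Hence a maximal disjoint family yields a finite set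
`F` meeting all of them, and by finiteness one point `s ∈ F` lies in such sets for arbitrarily
small `δ`; since `a ≥ 2`, the dynamical balls `{y | ∀ k, d(f^k y, f^k s) ≤ δ}` never shrink to
`{s}`. But the ball of radius `e/2` is finite (its iterates are `e`-small, so it has fewer than
`m` points), and a finite set meets all small enough balls around `s` only in `s`.
-/

variable {X : Type*} [MetricSpace X]

/-- The `k`-th iterate (`k ∈ ℤ`) of a homeomorphism, as a function. -/
noncomputable def hiter (f : X ≃ₜ X) (k : ℤ) : X → X := ⇑(f.toEquiv ^ k)

/-- A set is `δ`-separated if distinct points are at distance `> δ`. -/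
def IsSeparated' (δ : ℝ) (B : Set X) : Prop :=
  ∀ x ∈ B, ∀ y ∈ B, x ≠ y → δ < dist x y

/-- The `δ`-cardinality of a set: sup of cardinalities of `δ`-separated subsets. -/
noncomputable def dCard (δ : ℝ) (A : Set X) : ℕ∞ :=
  ⨆ B ∈ {B : Set X | B ⊆ A ∧ IsSeparated' δ B}, B.encard

/-- `(m,n)`-expansiveness with a given expansive constant `δ`. -/
def MNExpansiveWith (f : X ≃ₜ X) (m n : ℕ) (δ : ℝ) : Prop :=
  ∀ A : Set X, A.encard = m → ∃ k : ℤ, (n : ℕ∞) < dCard δ (hiter f k '' A)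

/-- `(m,n)`-expansiveness. -/
def MNExpansive (f : X ≃ₜ X) (m n : ℕ) : Prop :=
  ∃ δ > 0, MNExpansiveWith f m n δ

open Topology

section DCard

lemma IsSeparated'.mono {δ : ℝ} {B C : Set X} (hBC : B ⊆ C) (hC : IsSeparated' δ C) :
    IsSeparated' δ B :=
  fun x hx y hy hxy => hC x (hBC hx) y (hBC hy) hxy

lemma IsSeparated'.anti {δ δ' : ℝ} {B : Set X} (hδ : δ ≤ δ') (hB : IsSeparated' δ' B) :
    IsSeparated' δ B :=
  fun x hx y hy hxy => hδ.trans_lt (hB x hx y hy hxy)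

lemma encard_le_dCard {δ : ℝ} {A B : Set X} (hBA : B ⊆ A) (hB : IsSeparated' δ B) :
    B.encard ≤ dCard δ A :=
  le_iSup₂_of_le B ⟨hBA, hB⟩ le_rfl

lemma dCard_mono (δ : ℝ) : Monotone (dCard (X := X) δ) :=
  fun _ _ hAA' => iSup₂_le fun _ ⟨hBA, hB⟩ => encard_le_dCard (hBA.trans hAA') hB

lemma dCard_antitone (A : Set X) : Antitone fun δ => dCard δ A :=
  fun _ _ hδ => iSup₂_le fun _ ⟨hBA, hB⟩ => encard_le_dCard hBA (hB.anti hδ)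

lemma dCard_union_le (δ : ℝ) (A A' : Set X) :
    dCard δ (A ∪ A') ≤ dCard δ A + dCard δ A' := by
  refine iSup₂_le fun B ⟨hBA, hB⟩ => ?_
  calc B.encard = (B ∩ A ∪ B ∩ A').encard := by rw [← Set.inter_union_distrib_left,
        Set.inter_eq_left.mpr hBA]
    _ ≤ (B ∩ A).encard + (B ∩ A').encard := Set.encard_union_le _ _
    _ ≤ dCard δ A + dCard δ A' := add_le_add
        (encard_le_dCard Set.inter_subset_right (hB.mono Set.inter_subset_left))
        (encard_le_dCard Set.inter_subset_right (hB.mono Set.inter_subset_left))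

lemma dCard_le_one_iff {δ : ℝ} (hδ : 0 ≤ δ) {A : Set X} :
    dCard δ A ≤ 1 ↔ ∀ x ∈ A, ∀ y ∈ A, dist x y ≤ δ := by
  constructor
  · intro h x hx y hy
    by_contra! hxy
    have hne : x ≠ y := by rintro rfl; simp at hxy; linarith
    have hsep : IsSeparated' δ {x, y} := by
      rintro u (rfl | rfl) v (rfl | rfl) huv <;> first
        | exact absurd rfl huv | exact hxy | rwa [dist_comm]
    have := (encard_le_dCard (Set.pair_subset hx hy) hsep).trans h
    rw [Set.encard_pair hne] at this
    norm_num at this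
  · intro h
    refine iSup₂_le fun B ⟨hBA, hB⟩ => Set.encard_le_one_iff.mpr fun x y hx hy => ?_
    by_contra hxy
    exact (hB x hx y hy hxy).not_ge (h x (hBA hx) y (hBA hy))

end DCard

section Clusters

def IsCluster (f : X ≃ₜ X) (a : ℕ) (δ : ℝ) (A : Set X) : Prop :=
  A.encard = a ∧ ∀ k : ℤ, dCard δ (hiter f k '' A) ≤ 1

variable {f : X ≃ₜ X} {a m n : ℕ} {δ δ' e : ℝ} {A : Set X}

lemma not_mnExpansiveWith_one_iff : ¬ MNExpansiveWith f a 1 δ ↔ ∃ A, IsCluster f a δ A := by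
  simp [MNExpansiveWith, IsCluster]

lemma IsCluster.anti (hδ : δ ≤ δ') (hA : IsCluster f a δ A) : IsCluster f a δ' A :=
  ⟨hA.1, fun k => (dCard_antitone _ hδ).trans (hA.2 k)⟩

lemma IsCluster.dist_le (hδ : 0 ≤ δ) (hA : IsCluster f a δ A) {x y : X} (hx : x ∈ A)
    (hy : y ∈ A) (k : ℤ) : dist (hiter f k x) (hiter f k y) ≤ δ :=
  (dCard_le_one_iff hδ).mp (hA.2 k) _ ⟨x, hx, rfl⟩ _ ⟨y, hy, rfl⟩

lemma exists_finite_not_disjoint_of_isCluster (hf : MNExpansiveWith f m n e) (hm : m ≤ a * n) :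
    ∃ F : Set X, F.Finite ∧ ∀ A, IsCluster f a e A → ¬ Disjoint A F := by
  by_contra! h
  have hunion : ∀ c : ℕ, ∃ U : Set X,
      U.encard = ((c * a : ℕ) : ℕ∞) ∧ ∀ k, dCard e (hiter f k '' U) ≤ c := by
    intro c
    induction c with
    | zero => exact ⟨∅, by simp, fun k => by simp [dCard]⟩
    | succ c ih =>
      obtain ⟨U, hUcard, hU⟩ := ih
      obtain ⟨C, ⟨hCcard, hC⟩, hCU⟩ := h U (Set.finite_of_encard_eq_coe hUcard)
      refine ⟨U ∪ C, ?_, fun k => ?_⟩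
      · rw [Set.encard_union_eq hCU.symm, hUcard, hCcard]
        push_cast
        ring
      · rw [Set.image_union]
        push_cast
        exact (dCard_union_le _ _ _).trans (add_le_add (hU k) (hC k))
  obtain ⟨U, hUcard, hU⟩ := hunion n
  obtain ⟨B, hBU, hBcard⟩ := Set.exists_subset_encard_eq
    (show (m : ℕ∞) ≤ U.encard by rw [hUcard, mul_comm]; exact_mod_cast hm)
  obtain ⟨k, hk⟩ := hf B hBcard
  exact hk.not_ge ((dCard_mono e (Set.image_mono hBU)).trans (hU k))

lemma exists_mem_isCluster_forall_pos {F : Set X} (hF : F.Finite)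
    (hFA : ∀ A, IsCluster f a e A → ¬ Disjoint A F) (he : 0 < e)
    (hcl : ∀ δ > 0, ∃ A, IsCluster f a δ A) :
    ∃ s ∈ F, ∀ δ > 0, ∃ A, IsCluster f a δ A ∧ s ∈ A := by
  by_contra! h
  have hev : ∀ᶠ δ in 𝓝[>] (0 : ℝ), ∀ s ∈ F, ∀ A, IsCluster f a δ A → s ∉ A := by
    refine (Filter.eventually_all_finite hF).2 fun s hs => ?_
    obtain ⟨δs, hδs, hs'⟩ := h s hs
    filter_upwards [Ioc_mem_nhdsGT hδs] with δ hδ A hA using hs' A (hA.anti hδ.2)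
  obtain ⟨δ, hδ, hδpos, hδe⟩ := (hev.and (Ioc_mem_nhdsGT he)).exists
  obtain ⟨A, hA⟩ := hcl δ hδpos
  obtain ⟨s, hsA, hsF⟩ := Set.not_disjoint_iff.mp (hFA A (hA.anti hδe))
  exact hδ s hsF A hA hsA

end Clusters

section DynBall

def dynBall (f : X ≃ₜ X) (s : X) (δ : ℝ) : Set X :=
  {y | ∀ k : ℤ, dist (hiter f k y) (hiter f k s) ≤ δ}

variable {f : X ≃ₜ X} {m n : ℕ} {s y : X} {δ e : ℝ}

lemma dynBall_mono (f : X ≃ₜ X) (s : X) : Monotone (dynBall f s) :=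
  fun _ _ hδ _ hy k => (hy k).trans hδ

lemma dist_le_of_mem_dynBall (hy : y ∈ dynBall f s δ) : dist y s ≤ δ := by
  simpa [hiter] using hy 0

lemma dCard_image_dynBall_le_one (hδ : 0 ≤ δ) (k : ℤ) :
    dCard (2 * δ) (hiter f k '' dynBall f s δ) ≤ 1 := by
  refine (dCard_le_one_iff (by positivity)).mpr ?_
  rintro _ ⟨x, hx, rfl⟩ _ ⟨y, hy, rfl⟩
  linarith [dist_triangle_right (hiter f k x) (hiter f k y) (hiter f k s), hx k, hy k]

lemma dynBall_finite (hf : MNExpansiveWith f m n e) (hn : 1 ≤ n) (he : 0 ≤ e) :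
    (dynBall f s (e / 2)).Finite := by
  by_contra hinf
  obtain ⟨B, hB, hBcard⟩ := Set.exists_subset_encard_eq
    (show (m : ℕ∞) ≤ (dynBall f s (e / 2)).encard by simp [Set.Infinite.encard_eq hinf])
  obtain ⟨k, hk⟩ := hf B hBcard
  have hball := dCard_image_dynBall_le_one (f := f) (s := s) (δ := e / 2) (by positivity) k
  rw [mul_div_cancel₀ e two_ne_zero] at hball
  exact hk.not_ge (((dCard_mono e (Set.image_mono hB)).trans hball).trans (by exact_mod_cast hn))

lemma exists_pos_dynBall_subset_singleton (h : (dynBall f s δ).Finite) (hδ : 0 < δ) :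
    ∃ ε > 0, dynBall f s ε ⊆ {s} := by
  have hD : (dynBall f s δ \ {s}).Finite := h.sdiff
  obtain ⟨r, hr, hball⟩ := Metric.isOpen_iff.mp hD.isClosed.isOpen_compl s (by simp)
  refine ⟨min δ (r / 2), by positivity, fun y hy => ?_⟩
  by_contra hys
  have hdist : dist y s < r := (dist_le_of_mem_dynBall hy).trans_lt
    ((min_le_right _ _).trans_lt (half_lt_self hr))
  exact hball (Metric.mem_ball.mpr hdist) ⟨dynBall_mono f s (min_le_left _ _) hy, hys⟩

end DynBall

theorem MNExpansive.mnExpansive_one_of_le_mul {f : X ≃ₜ X} {a m n : ℕ}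
    (hf : MNExpansive f m n) (hn : 1 ≤ n) (ha : 2 ≤ a) (hm : m ≤ a * n) : MNExpansive f a 1 := by
  obtain ⟨e, he, hfe⟩ := hf
  by_contra h
  have hcl : ∀ δ > 0, ∃ A, IsCluster f a δ A := fun δ hδ =>
    not_mnExpansiveWith_one_iff.mp fun hδ' => h ⟨δ, hδ, hδ'⟩
  obtain ⟨F, hF, hFA⟩ := exists_finite_not_disjoint_of_isCluster hfe hm
  obtain ⟨s, -, hs⟩ := exists_mem_isCluster_forall_pos hF hFA he hcl
  obtain ⟨ε, hε, hsub⟩ :=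
    exists_pos_dynBall_subset_singleton (dynBall_finite hfe hn he.le) (half_pos he)
  obtain ⟨A, hA, hsA⟩ := hs ε hε
  obtain ⟨y, hyA, hys⟩ :=
    Set.exists_ne_of_one_lt_encard (by rw [hA.1]; exact_mod_cast ha) s
  exact hys (hsub fun k => hA.dist_le hε.le hyA hsA k)

theorem stmt7_general (f : X ≃ₜ X) (a m n : ℕ) (h1 : n < m) (h2 : 1 ≤ n)
    (hm : m ≤ a * n) (hf : MNExpansive f m n) :
    MNExpansive f a 1 ∧ (m ≤ 2 * n → MNExpansive f 2 1) := by
  have ha : 2 ≤ a := by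
    by_contra! ha
    interval_cases a <;> omega
  exact ⟨hf.mnExpansive_one_of_le_mul h2 ha hm,
    fun h2n => hf.mnExpansive_one_of_le_mul h2 le_rfl h2n⟩

theorem stmt7 [CompactSpace X] (f : X ≃ₜ X) (a m n : ℕ) (h1 : n < m) (h2 : 1 ≤ n)
    (h3 : 1 ≤ a) (hm : m ≤ a * n) (hf : MNExpansive f m n) :
    MNExpansive f a 1 ∧ (m ≤ 2 * n → MNExpansive f 2 1) :=
  stmt7_general f a m n h1 h2 hm hf
end

section
/- If X is a compact metric space admitting a (4,3)-expansive homeomorphism, then X is a finite set. -/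
variable {X : Type*} [MetricSpace X]

/-!
If neither `f` nor `f⁻¹` were positively `δ`-expansive, a pair of distinct points staying
`δ`-close in forward time and one staying `δ`-close in backward time would lie in a common
4-point set, each of whose iterates has `δ`-cardinality at most 3. So some `g ∈ {f, f⁻¹}` is
positively `δ`-expansive. By compactness a `δ`-separated pair separates again within a bounded
time, so the backward iterates of `g` are uniformly equicontinuous: `η`-close points stay
`δ`-close under every `g⁻ⁿ`. If `X` were infinite, take more points than the largest
`η/2`-separated set: at every time two of them have `η/2`-close images, so one fixed pair does at
infinitely many times `n`; equicontinuity keeps that pair `δ`-close at all times before each such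
`n`, hence forever, contradicting expansivity.
-/

open Function Metric Set Filter
open scoped NNReal

lemma Function.LeftInverse.iterate_apply_iterate_of_le {α : Type*} {f g : α → α}
    (h : LeftInverse g f) {j n : ℕ} (hjn : j ≤ n) (x : α) :
    g^[j] (f^[n] x) = f^[n - j] x := by
  obtain ⟨k, rfl⟩ := Nat.exists_eq_add_of_le hjn
  rw [iterate_add_apply, h.iterate j, Nat.add_sub_cancel_left]

lemma hiter_natCast (f : X ≃ₜ X) (n : ℕ) : hiter f n = (⇑f)^[n] := by
  rw [hiter, zpow_natCast, Equiv.Perm.coe_pow]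
  rfl

lemma hiter_neg_natCast (f : X ≃ₜ X) (n : ℕ) : hiter f (-n) = (⇑f.symm)^[n] := by
  rw [hiter, zpow_neg, zpow_natCast, ← inv_pow, Equiv.Perm.coe_pow]
  rfl

lemma hiter_injective (f : X ≃ₜ X) (k : ℤ) : Injective (hiter f k) :=
  (f.toEquiv ^ k).injective

lemma dCard_le_encard_sub_one {δ : ℝ} {S : Set X} (hS : S.Finite) {u v : X} (hu : u ∈ S)
    (hv : v ∈ S) (huv : u ≠ v) (hd : dist u v ≤ δ) : dCard δ S ≤ S.encard - 1 := by
  refine iSup₂_le fun B ⟨hBS, hB⟩ ↦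
    ENat.le_sub_one_of_lt ((hS.subset hBS).encard_lt_encard (hBS.ssubset_of_ne ?_))
  rintro rfl
  exact (hB u hu v hv huv).not_ge hd

lemma exists_card_le_of_isSeparated' [CompactSpace X] {ε : ℝ} (hε : 0 < ε) :
    ∃ M : ℕ, ∀ s : Finset X, IsSeparated' ε (s : Set X) → s.card ≤ M := by
  lift ε to ℝ≥0 using hε.le
  obtain ⟨N, -, hNfin, hN⟩ := exists_finite_isCover_of_isCompact (ε := ε / 2)
    (by simpa using hε.ne') (isCompact_univ (X := X))
  have hpack : packingNumber ε (univ : Set X) ≤ hNfin.toFinset.card := by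
    rw [← hNfin.encard_eq_coe_toFinset_card]
    simpa [mul_div_cancel₀] using
      (packingNumber_two_mul_le_externalCoveringNumber (ε / 2) univ).trans
        hN.externalCoveringNumber_le_encard
  refine ⟨hNfin.toFinset.card, fun s hs ↦ ?_⟩
  have hsep : IsSeparated ε (s : Set X) := fun x hx y hy hxy ↦ by
    simpa [edist_dist] using (ENNReal.ofReal_lt_ofReal_iff_of_nonneg ε.2).2 (hs x hx y hy hxy)
  have := (hsep.encard_le_packingNumber (subset_univ _)).trans hpack
  rwa [encard_coe_eq_coe_finsetCard, Nat.cast_le] at this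

def PosExpansiveWith (g : X → X) (c : ℝ) : Prop :=
  ∀ x y, (∀ n : ℕ, dist (g^[n] x) (g^[n] y) ≤ c) → x = y

namespace PosExpansiveWith

variable {g : X → X} {c : ℝ}

lemma exists_separation_time [CompactSpace X] (hg : PosExpansiveWith g c) (hc : 0 < c)
    (hcont : Continuous g) (hinj : Injective g) :
    ∃ N : ℕ, ∀ x y, c < dist x y →
      ∃ j ∈ Finset.Icc 1 N, c < dist (g^[j] x) (g^[j] y) := by
  let K : Set (X × X) := {p | c ≤ dist p.1 p.2}
  let V : ℕ → Set (X × X) := fun N ↦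
    {p | ∀ j ∈ Finset.Icc 1 N, dist (g^[j] p.1) (g^[j] p.2) ≤ c}
  have hK : IsCompact K := (isClosed_le continuous_const continuous_dist).isCompact
  have hV : ∀ N, IsClosed (V N) := fun N ↦ by
    simp only [V, ofPred_forall]
    exact isClosed_biInter fun j _ ↦ isClosed_le
      (((hcont.iterate j).comp continuous_fst).dist ((hcont.iterate j).comp continuous_snd))
      continuous_const
  have hKV : K ∩ ⋂ N, V N = ∅ := by
    refine eq_empty_of_forall_notMem fun ⟨x, y⟩ ⟨hxy, hV⟩ ↦ ?_
    have hgxy : g x = g y := hg _ _ fun n ↦ by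
      simpa only [← iterate_succ_apply] using mem_iInter.1 hV (n + 1) (n + 1) (by simp)
    simp only [K, mem_ofPred_eq, hinj hgxy, dist_self] at hxy
    exact hxy.not_gt hc
  obtain ⟨N, hN⟩ := hK.elim_directed_family_closed V hV hKV <|
    directed_of_isDirected_le fun _ _ hMN _ hp j hj ↦ hp j (Finset.Icc_subset_Icc_right hMN hj)
  refine ⟨N, fun x y hxy ↦ ?_⟩
  have : (x, y) ∉ V N := fun hV ↦ (eq_empty_iff_forall_notMem.1 hN) (x, y) ⟨hxy.le, hV⟩
  simpa [V, and_assoc] using this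

lemma exists_dist_iterate_symm_le [CompactSpace X] {g : X ≃ₜ X} (hg : PosExpansiveWith g c)
    (hc : 0 < c) :
    ∃ η > 0, ∀ x y, dist x y < η →
      ∀ n : ℕ, dist (g.symm^[n] x) (g.symm^[n] y) ≤ c := by
  obtain ⟨N, hN⟩ := hg.exists_separation_time hc g.continuous g.injective
  have hequi : UniformEquicontinuous fun j : Fin (N + 1) ↦ (⇑g.symm)^[j] :=
    uniformEquicontinuous_finite.2 fun j ↦
      CompactSpace.uniformContinuous_of_continuous (g.symm.continuous.iterate j)
  obtain ⟨η, hη, hηN⟩ := Metric.uniformEquicontinuous_iff.1 hequi c hc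
  refine ⟨η, hη, fun x y hxy n ↦ ?_⟩
  induction n using Nat.strong_induction_on with
  | _ n ih =>
    by_cases hnN : n ≤ N
    · exact (hηN x y hxy ⟨n, Nat.lt_succ_of_le hnN⟩).le
    -- a pair `c`-apart at time `-n` is `c`-apart again at some time `j - n` with `1 ≤ j ≤ N`
    by_contra! hsep
    obtain ⟨j, hj, hjsep⟩ := hN _ _ hsep
    rw [Finset.mem_Icc] at hj
    have hgj : ∀ z, g^[j] (g.symm^[n] z) = g.symm^[n - j] z :=
      LeftInverse.iterate_apply_iterate_of_le (f := g.symm) g.apply_symm_apply (by omega)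
    rw [hgj, hgj] at hjsep
    exact hjsep.not_ge (ih (n - j) (by omega))

theorem finite [CompactSpace X] {g : X ≃ₜ X} (hg : PosExpansiveWith g c) (hc : 0 < c) :
    Finite X := by
  classical
  obtain ⟨η, hη, hback⟩ := hg.exists_dist_iterate_symm_le hc
  obtain ⟨M, hM⟩ := exists_card_le_of_isSeparated' (X := X) (half_pos hη)
  by_contra hfin
  have : Infinite X := not_finite_iff_infinite.mp hfin
  obtain ⟨T, hT⟩ := Infinite.exists_subset_card_eq X (M + 1)
  have hclose : ∀ n, ∃ p ∈ T.offDiag, dist (g^[n] p.1) (g^[n] p.2) ≤ η / 2 := fun n ↦ by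
    have hcard : M < (T.image g^[n]).card := by
      rw [Finset.card_image_of_injective _ (g.injective.iterate n), hT]; omega
    have := mt (hM _) hcard.not_ge
    simp only [IsSeparated', Finset.coe_image, mem_image, Finset.mem_coe] at this
    push Not at this
    obtain ⟨_, ⟨x, hx, rfl⟩, _, ⟨y, hy, rfl⟩, hxy, hd⟩ := this
    exact ⟨(x, y), Finset.mem_offDiag.2 ⟨hx, hy, fun h ↦ hxy (congrArg _ h)⟩, hd⟩
  obtain ⟨⟨x, y⟩, hxy, hfreq⟩ :
      ∃ p ∈ T.offDiag, ∃ᶠ n in atTop, dist (g^[n] p.1) (g^[n] p.2) ≤ η / 2 := by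
    by_contra! h
    obtain ⟨n, hn⟩ := ((eventually_all_finset _).2 fun p hp ↦ h p hp).exists
    obtain ⟨p, hp, hpn⟩ := hclose n
    exact (hn p hp).not_ge hpn
  refine (Finset.mem_offDiag.1 hxy).2.2 (hg x y fun m ↦ ?_)
  obtain ⟨n, hmn, hn⟩ := frequently_atTop.1 hfreq m
  have hgm : ∀ z, g.symm^[n - m] (g^[n] z) = g^[m] z := fun z ↦ by
    rw [LeftInverse.iterate_apply_iterate_of_le g.symm_apply_apply (Nat.sub_le n m),
      Nat.sub_sub_self hmn]
  rw [← hgm, ← hgm]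
  exact hback _ _ (hn.trans_lt (half_lt_self hη)) _

end PosExpansiveWith

lemma MNExpansiveWith.posExpansiveWith_or [Infinite X] {f : X ≃ₜ X} {δ : ℝ}
    (h : MNExpansiveWith f 4 3 δ) : PosExpansiveWith f δ ∨ PosExpansiveWith f.symm δ := by
  classical
  by_contra! hne
  simp only [PosExpansiveWith, not_forall] at hne
  obtain ⟨⟨a, b, hab, hne_ab⟩, ⟨p, q, hpq, hne_pq⟩⟩ := hne
  obtain ⟨S, hsub, hS⟩ := Infinite.exists_superset_card_eq {a, b, p, q} 4 Finset.card_le_four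
  obtain ⟨k, hk⟩ := h S (by simp [hS])
  have hS4 : (hiter f k '' S).encard = 4 := by
    rw [(hiter_injective f k).encard_image]
    simp [hS]
  have hle : ∀ u ∈ S, ∀ v ∈ S, u ≠ v → dist (hiter f k u) (hiter f k v) ≤ δ →
      dCard δ (hiter f k '' S) ≤ 3 := fun u hu v hv huv hd ↦
    (dCard_le_encard_sub_one (S.finite_toSet.image _) (mem_image_of_mem _ hu)
      (mem_image_of_mem _ hv) ((hiter_injective f k).ne huv) hd).trans_eq (by rw [hS4]; rfl)
  refine hk.not_ge ?_
  obtain ⟨n, rfl | rfl⟩ := Int.eq_nat_or_neg k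
  · exact hle a (hsub (by simp)) b (hsub (by simp)) hne_ab (by simpa [hiter_natCast] using hab n)
  · exact hle p (hsub (by simp)) q (hsub (by simp)) hne_pq
      (by simpa [hiter_neg_natCast] using hpq n)

theorem stmt8 [CompactSpace X] (f : X ≃ₜ X) (hf : MNExpansive f 4 3) :
    Finite X := by
  obtain ⟨δ, hδ, h⟩ := hf
  by_contra hfin
  have : Infinite X := not_finite_iff_infinite.mp hfin
  rcases h.posExpansiveWith_or with hpos | hpos
  · exact hfin (hpos.finite hδ)
  · exact hfin (hpos.finite hδ)
end

section
/- Let f : X → X be a homeomorphism of a compact metric space. If f is (m,n)-expansive for some integers m > n ≥ 1, then f is continuum-wise expansive. -/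
/-!
A nondegenerate continuum is infinite, so it contains `m` points, and `(m,n)`-expansiveness
makes some iterate of them have `δ`-cardinality `> n ≥ 1`. But a set of diameter `< δ` has
`δ`-cardinality at most `1`, so the iterates of such a continuum cannot all stay `δ`-small.
-/

variable {X : Type*} [MetricSpace X]

/-- Continuum-wise expansiveness. -/
def CWExpansive (f : X ≃ₜ X) : Prop :=
  ∃ δ > 0, ∀ A : Set X, IsCompact A → IsConnected A →
    (∀ k : ℤ, Metric.diam (hiter f k '' A) < δ) → ∃ x, A = {x}

lemma hiter_eq_coe_zpow (f : X ≃ₜ X) (k : ℤ) : hiter f k = ⇑(f ^ k) := by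
  let toPerm : (X ≃ₜ X) →* Equiv.Perm X := ⟨⟨Homeomorph.toEquiv, rfl⟩, fun _ _ => rfl⟩
  exact congrArg DFunLike.coe (map_zpow toPerm f k).symm

lemma continuous_hiter (f : X ≃ₜ X) (k : ℤ) : Continuous (hiter f k) :=
  hiter_eq_coe_zpow f k ▸ (f ^ k).continuous

lemma dCard_le_one_of_diam_le {δ : ℝ} {A : Set X} (hA : Bornology.IsBounded A)
    (hdiam : Metric.diam A ≤ δ) : dCard δ A ≤ 1 := by
  refine iSup₂_le fun B ⟨hBA, hB⟩ => Set.encard_le_one_iff.mpr fun x y hx hy => ?_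
  by_contra hxy
  have := Metric.dist_le_diam_of_mem hA (hBA hx) (hBA hy)
  linarith [hB x hx y hy hxy]

lemma dCard_mono_s12 {δ : ℝ} {A A' : Set X} (h : A ⊆ A') : dCard δ A ≤ dCard δ A' :=
  biSup_mono fun _ ⟨hBA, hB⟩ => ⟨hBA.trans h, hB⟩

lemma MNExpansiveWith.exists_lt_dCard_image {f : X ≃ₜ X} {m n : ℕ} {δ : ℝ}
    (hf : MNExpansiveWith f m n δ) {A : Set X} (hA : (m : ℕ∞) ≤ A.encard) :
    ∃ k : ℤ, (n : ℕ∞) < dCard δ (hiter f k '' A) := by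
  obtain ⟨S, hSA, hS⟩ := Set.exists_subset_encard_eq hA
  obtain ⟨k, hk⟩ := hf S hS
  exact ⟨k, hk.trans_le (dCard_mono_s12 (Set.image_mono hSA))⟩

theorem stmt12_general (f : X ≃ₜ X) (m n : ℕ) (h1 : 1 ≤ n)
    (hf : MNExpansive f m n) : CWExpansive f := by
  obtain ⟨δ, hδ, hfδ⟩ := hf
  refine ⟨δ, hδ, fun A hA hconn hdiam => ?_⟩
  obtain ⟨x, rfl⟩ | hnt := hconn.nonempty.exists_eq_singleton_or_nontrivial
  · exact ⟨x, rfl⟩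
  have hinf : A.encard = ⊤ := (hconn.isPreconnected.infinite_of_nontrivial hnt).encard_eq
  obtain ⟨k, hk⟩ := hfδ.exists_lt_dCard_image (A := A) (hinf ▸ le_top)
  have hle := dCard_le_one_of_diam_le (hA.image (continuous_hiter f k)).isBounded (hdiam k).le
  have : n < 1 := by exact_mod_cast hk.trans_le hle
  omega

theorem stmt12 [CompactSpace X] (f : X ≃ₜ X) (m n : ℕ) (h1 : 1 ≤ n) (h2 : n < m)
    (hf : MNExpansive f m n) : CWExpansive f :=
  stmt12_general f m n h1 hf
end
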